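/- For all n ≥ 2, the set D = {(0,0,0), (n−1,n−1,1)} is a perfect (n−1)-error-correcting code in P_n □ P_n □ P_2: the two codewords are at distance 2(n−1)+1 = 2n−1, and every vertex is within distance n−1 of some codeword. -/

import Mathlib

/-!
Every vertex lies on a geodesic between the two codewords, so its distances to them add up to
the odd number `2n - 1`, and one of the two is at most `n - 1`.
-/

/-- Distance between labels on a path: `|x - y|`. -/
def pathDist (x y : ℕ) : ℕ := ((x : ℤ) - y).natAbs

lemma pathDist_of_le {x y : ℕ} (h : x ≤ y) : pathDist x y = y - x := by
  unfold pathDist; omega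

lemma pathDist_comm (x y : ℕ) : pathDist x y = pathDist y x := by
  unfold pathDist; omega

lemma pathDist_add_pathDist_of_le {x y z : ℕ} (hxy : x ≤ y) (hyz : y ≤ z) :
    pathDist y x + pathDist y z = pathDist x z := by
  rw [pathDist_comm y x, pathDist_of_le hxy, pathDist_of_le hyz, pathDist_of_le (hxy.trans hyz)]
  omega

theorem perfect_code_in_Pn_Pn_P2 (n : ℕ) (hn : 2 ≤ n) :
    -- L1 distance in P_n □ P_n □ P_2
    let dist : Fin n × Fin n × Fin 2 → Fin n × Fin n × Fin 2 → ℕ :=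
      fun p q => pathDist p.1.val q.1.val + pathDist p.2.1.val q.2.1.val +
        pathDist p.2.2.val q.2.2.val
    let c0 : Fin n × Fin n × Fin 2 := (⟨0, by omega⟩, ⟨0, by omega⟩, 0)
    let c1 : Fin n × Fin n × Fin 2 := (⟨n - 1, by omega⟩, ⟨n - 1, by omega⟩, 1)
    let D : Set (Fin n × Fin n × Fin 2) := {c0, c1}
    -- the two codewords are at distance 2(n-1)+1 = 2n-1
    dist c0 c1 = 2 * n - 1 ∧
    -- every vertex is within distance n-1 of some codeword
    (∀ v : Fin n × Fin n × Fin 2, ∃ d ∈ D, dist v d ≤ n - 1) := by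
  intro dist c0 c1 D
  have hcodewords : dist c0 c1 = 2 * n - 1 := by
    simp only [dist, c0, c1, Fin.val_zero, Fin.val_one, pathDist_of_le (Nat.zero_le _)]
    omega
  have hgeodesic (v : Fin n × Fin n × Fin 2) : dist v c0 + dist v c1 = dist c0 c1 := by
    obtain ⟨a, b, c⟩ := v
    have ha := pathDist_add_pathDist_of_le a.val.zero_le (show a.val ≤ n - 1 by omega)
    have hb := pathDist_add_pathDist_of_le b.val.zero_le (show b.val ≤ n - 1 by omega)
    have hc := pathDist_add_pathDist_of_le c.val.zero_le (show c.val ≤ 1 by omega)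
    simp only [dist, c0, c1, Fin.val_zero, Fin.val_one] at ha hb hc ⊢
    omega
  refine ⟨hcodewords, fun v => ?_⟩
  by_cases hv : dist v c0 ≤ n - 1
  · exact ⟨c0, Or.inl rfl, hv⟩
  · exact ⟨c1, Or.inr rfl, by have := hgeodesic v; omega⟩
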